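/- Let G₁ be a full reduced torsion-free abelian group, G₂ a reduced torsion-free abelian group, and h an injective group homomorphism from G₁ into G₂. Then for every x ∈ G₁ with x ≠ 0 one has P(x,G₁) = P(h(x),G₂). -/

import Mathlib

/-! Divisibility by prime powers is preserved by homomorphisms, so only `P(h x, G₂) ⊆ P(x, G₁)`
needs an argument. If `p ∈ P(h x, G₂)` lies in `P⁻(x, G₁)`, witnessed by `y`, then `h y` is
`qⁿ`-divisible for every prime `q ≠ p` because `y` is, and `pⁿ`-divisible as the difference of
`h x` and `h (x - y)`. Hence `h y ≠ 0` is divisible by every positive integer, and in a torsion-free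
group this yields an embedding `r ↦ r • h y` of `ℚ`, contradicting that `G₂` is reduced. -/

/-- An abelian group is torsion-free: `n • x = 0` implies `n = 0` or `x = 0`. -/
def IsTorsionFreeAb (G : Type*) [AddCommGroup G] : Prop :=
  ∀ (n : ℤ) (x : G), n • x = 0 → n = 0 ∨ x = 0

/-- An abelian group is reduced: `(ℚ,+)` does not embed into it. -/
def IsReducedAb (G : Type*) [AddCommGroup G] : Prop :=
  ¬ ∃ f : ℚ →+ G, Function.Injective f

/-- `P(x,G)`: the set of primes `p` such that `x` is divisible by `pⁿ` in `G` for every `n`. -/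
def PrimesDiv (G : Type*) [AddCommGroup G] (x : G) : Set ℕ :=
  {p | p.Prime ∧ ∀ n : ℕ, ∃ y : G, (p ^ n) • y = x}

/-- `P⁻(x,G)`: the set of primes `p ∉ P(x,G)` such that some `y ≠ 0` is divisible by all
powers of every prime `q ≠ p` and `p ∈ P(x-y,G)`. -/
def PrimesDivNeg (G : Type*) [AddCommGroup G] (x : G) : Set ℕ :=
  {p | p.Prime ∧ p ∉ PrimesDiv G x ∧ ∃ y : G, y ≠ 0 ∧
    (∀ q : ℕ, q.Prime → q ≠ p → q ∈ PrimesDiv G y) ∧ p ∈ PrimesDiv G (x - y)}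

/-- A subgroup `H` of an abelian group `G` is pure if `nG ∩ H = nH` for every integer `n`. -/
def IsPureSubgroup {G : Type*} [AddCommGroup G] (H : AddSubgroup G) : Prop :=
  ∀ (n : ℤ) (h : G), h ∈ H → (∃ g : G, n • g = h) → ∃ h' ∈ H, n • h' = h

/-- `G` is full: for every `x ≠ 0` every prime belongs to `P(x,G) ∪ P⁻(x,G)`. -/
def IsFullAb (G : Type*) [AddCommGroup G] : Prop :=
  ∀ x : G, x ≠ 0 → ∀ p : ℕ, p.Prime → p ∈ PrimesDiv G x ∪ PrimesDivNeg G x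

lemma IsTorsionFreeAb.isAddTorsionFree {G : Type*} [AddCommGroup G] (htf : IsTorsionFreeAb G) :
    IsAddTorsionFree G where
  nsmul_right_injective {n} hn a b hab := by
    have hsub : (n : ℤ) • (a - b) = 0 := by
      simpa [natCast_zsmul, smul_sub, sub_eq_zero] using hab
    exact sub_eq_zero.mp ((htf n _ hsub).resolve_left (by exact_mod_cast hn))

section Divisibility
variable {G : Type*} [AddCommGroup G]

lemma exists_mul_nsmul_eq_of_coprime {y : G} {a b : ℕ} (hab : a.Coprime b)
    (ha : ∃ z : G, a • z = y) (hb : ∃ z : G, b • z = y) : ∃ z : G, (a * b) • z = y := by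
  obtain ⟨z, hz⟩ := ha
  obtain ⟨w, hw⟩ := hb
  rw [← natCast_zsmul] at hz hw
  obtain ⟨s, t, hst⟩ := Nat.isCoprime_iff_coprime.mpr hab
  refine ⟨s • w + t • z, ?_⟩
  rw [← natCast_zsmul]
  calc ((a * b : ℕ) : ℤ) • (s • w + t • z)
      = (s * a) • ((b : ℤ) • w) + (t * b) • ((a : ℤ) • z) := by
        simp only [smul_add, smul_smul]; push_cast; congr 2 <;> ring
    _ = y := by rw [hw, hz, ← add_smul, hst, one_smul]

lemma exists_nsmul_eq_of_forall_prime_mem_primesDiv {y : G}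
    (hy : ∀ p : ℕ, p.Prime → p ∈ PrimesDiv G y) {n : ℕ} (hn : 0 < n) : ∃ z : G, n • z = y := by
  induction n using Nat.recOnPosPrimePosCoprime with
  | prime_pow p k hp _ => exact (hy p hp).2 k
  | zero => exact absurd hn (lt_irrefl 0)
  | one => exact ⟨y, one_smul _ _⟩
  | coprime a b ha hb hab iha ihb =>
    exact exists_mul_nsmul_eq_of_coprime hab (iha (by omega)) (ihb (by omega))

end Divisibility

lemma exists_injective_ratHom_of_forall_nsmul_eq {G : Type*} [AddCommGroup G] [IsAddTorsionFree G]
    {y : G} (hy : y ≠ 0) (hdiv : ∀ n : ℕ, 0 < n → ∃ z : G, n • z = y) :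
    ∃ f : ℚ →+ G, Function.Injective f := by
  choose! z hz using hdiv
  have hz' : ∀ n : ℕ, 0 < n → (n : ℤ) • z n = y := fun n hn => by
    rw [natCast_zsmul]; exact hz n hn
  -- `a • z b` is the value of the embedding at `a / b`; it only depends on that fraction.
  have hwd : ∀ (a c : ℤ) (b d : ℕ), 0 < b → 0 < d → (a / b : ℚ) = c / d → a • z b = c • z d := by
    intro a c b d hb hd hq
    have hcross : a * d = c * b := by
      rw [div_eq_div_iff (by positivity) (by positivity)] at hq; exact_mod_cast hq
    apply zsmul_right_injective (show (b * d : ℤ) ≠ 0 by positivity)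
    calc (b * d : ℤ) • (a • z b) = (a * d) • ((b : ℤ) • z b) := by
          rw [smul_smul, smul_smul]; ring_nf
      _ = (c * b) • ((d : ℤ) • z d) := by rw [hz' b hb, hz' d hd, hcross]
      _ = (b * d : ℤ) • (c • z d) := by
          rw [smul_smul, smul_smul]; ring_nf
  let f : ℚ →+ G := AddMonoidHom.mk' (fun q => q.num • z q.den) fun p q => by
    have hpq := Nat.mul_pos p.den_pos q.den_pos
    have hp : p = (p.num * q.den : ℤ) / (p.den * q.den : ℕ) := by
      push_cast; rw [mul_div_mul_right _ _ (by positivity), Rat.num_div_den]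
    have hq : q = (q.num * p.den : ℤ) / (p.den * q.den : ℕ) := by
      push_cast; rw [mul_comm (p.den : ℚ), mul_div_mul_right _ _ (by positivity), Rat.num_div_den]
    have hsum : p + q = (p.num * q.den + q.num * p.den : ℤ) / (p.den * q.den : ℕ) := by
      rw [Int.cast_add, add_div, ← hp, ← hq]
    change (p + q).num • z (p + q).den = p.num • z p.den + q.num • z q.den
    rw [hwd _ _ _ _ (p + q).den_pos hpq (by rw [Rat.num_div_den, ← hsum]), add_smul,
      hwd _ _ _ _ p.den_pos hpq (by rw [Rat.num_div_den, ← hp]),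
      hwd _ _ _ _ q.den_pos hpq (by rw [Rat.num_div_den, ← hq])]
  refine ⟨f, (injective_iff_map_eq_zero f).mpr fun q hq => ?_⟩
  have hnum : q.num • y = 0 := by
    rw [← hz' q.den q.den_pos, smul_comm]
    exact smul_eq_zero_of_right _ hq
  exact Rat.num_eq_zero.mp ((IsAddTorsionFree.zsmul_eq_zero_iff_left hy).mp hnum)

section PrimesDiv
variable {G H : Type*} [AddCommGroup G] [AddCommGroup H]

lemma mem_primesDiv_map {p : ℕ} {x : G} (f : G →+ H) (hp : p ∈ PrimesDiv G x) :
    p ∈ PrimesDiv H (f x) := by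
  refine ⟨hp.1, fun n => ?_⟩
  obtain ⟨y, hy⟩ := hp.2 n
  exact ⟨f y, by rw [← map_nsmul, hy]⟩

lemma mem_primesDiv_sub {p : ℕ} {x y : G} (hx : p ∈ PrimesDiv G x) (hy : p ∈ PrimesDiv G y) :
    p ∈ PrimesDiv G (x - y) := by
  refine ⟨hx.1, fun n => ?_⟩
  obtain ⟨u, hu⟩ := hx.2 n
  obtain ⟨v, hv⟩ := hy.2 n
  exact ⟨u - v, by rw [smul_sub, hu, hv]⟩

lemma eq_zero_of_forall_prime_mem_primesDiv [IsAddTorsionFree G] (hred : IsReducedAb G) {y : G}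
    (hy : ∀ p : ℕ, p.Prime → p ∈ PrimesDiv G y) : y = 0 := by
  by_contra hy0
  exact hred (exists_injective_ratHom_of_forall_nsmul_eq hy0
    fun _ => exists_nsmul_eq_of_forall_prime_mem_primesDiv hy)

end PrimesDiv

theorem PrimesDiv_eq_of_embedding_of_full_general (G₁ G₂ : Type) [AddCommGroup G₁] [AddCommGroup G₂]
    (h1full : IsFullAb G₁)
    (h2tf : IsTorsionFreeAb G₂) (h2red : IsReducedAb G₂)
    (h : G₁ →+ G₂) (hinj : Function.Injective h) (x : G₁) (hx : x ≠ 0) :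
    PrimesDiv G₁ x = PrimesDiv G₂ (h x) := by
  have := h2tf.isAddTorsionFree
  ext p
  refine ⟨mem_primesDiv_map h, fun hp => ?_⟩
  obtain hp₁ | ⟨-, -, y, hy0, hy, hxy⟩ := h1full x hx p hp.1
  · exact hp₁
  refine absurd (hinj ?_) hy0
  rw [map_zero]
  refine eq_zero_of_forall_prime_mem_primesDiv h2red fun q hq => ?_
  obtain rfl | hqp := eq_or_ne q p
  · simpa using mem_primesDiv_sub hp (mem_primesDiv_map h hxy)
  · exact mem_primesDiv_map h (hy q hq hqp)

/-- If `G₁` is full reduced torsion-free, `G₂` is reduced torsion-free and `h : G₁ → G₂` is an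
embedding, then `P(x,G₁) = P(h(x),G₂)` for every `x ≠ 0`. -/
theorem PrimesDiv_eq_of_embedding_of_full (G₁ G₂ : Type) [AddCommGroup G₁] [AddCommGroup G₂]
    (h1tf : IsTorsionFreeAb G₁) (h1red : IsReducedAb G₁) (h1full : IsFullAb G₁)
    (h2tf : IsTorsionFreeAb G₂) (h2red : IsReducedAb G₂)
    (h : G₁ →+ G₂) (hinj : Function.Injective h) (x : G₁) (hx : x ≠ 0) :
    PrimesDiv G₁ x = PrimesDiv G₂ (h x) :=
  PrimesDiv_eq_of_embedding_of_full_general G₁ G₂ h1full h2tf h2red h hinj x hx
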